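/- Let G be a connected, locally finite, quasi-transitive graph. Then the function p ↦ sup_{n≥1} (κ_p(n))^{1/n} is left continuous on (0,1]: for every p ∈ (0,1], lim_{ε→0+} sup_{n≥1} (κ_{p-ε}(n))^{1/n} = sup_{n≥1} (κ_p(n))^{1/n}. -/

import Mathlib

/-!
Lowering the parameter can only decrease connection probabilities, which gives the upper bound;
the content is the lower bound. Fix `n` with `κ_p(n)^{1/n} > c` and `a` with
`c^n < a < κ_p(n)`. Up to automorphisms there are only finitely many pairs at distance `≤ n`,
so a single radius `R` makes the probability of an open path of length `≤ R` exceed `a` for all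
of them. Such an event depends only on the at most `M` edges within distance `R` of the starting
point, and for events depending on `M` edges every configuration has `Bernoulli(q)` probability
at least `(q/p)^M` times its `Bernoulli(p)` probability. Hence `κ_q(n) ≥ (q/p)^M a > c^n` for
`q < p` close to `p`.
-/

open MeasureTheory Filter Topology

noncomputable section

namespace BernoulliPercolation

variable {V : Type*}

/-- The spanning subgraph of the retained (open) edges of a configuration `ω`:
edge `e` of `G` is retained iff `ω e = true`. -/
def openSubgraph (G : SimpleGraph V) (ω : G.edgeSet → Bool) : SimpleGraph V :=
  SimpleGraph.fromEdgeSet {e : Sym2 V | ∃ he : e ∈ G.edgeSet, ω ⟨e, he⟩ = true}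

/-- The event that `x` and `y` are connected in the percolation configuration. -/
def connEvent (G : SimpleGraph V) (x y : V) : Set (G.edgeSet → Bool) :=
  {ω | (openSubgraph G ω).Reachable x y}

/-- The event that `x` and `y` are joined by an open path of length at most `r`. -/
def connEventLe (G : SimpleGraph V) (x y : V) (r : ℕ) : Set (G.edgeSet → Bool) :=
  {ω | ∃ w : (openSubgraph G ω).Walk x y, w.IsPath ∧ w.length ≤ r}

/-- `μ` is Bernoulli bond percolation on `G` with retention parameter `p`:
the states of the edges are independent, and each edge is retained (open) with
probability `p` and deleted with probability `1 - p`. -/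
def IsBernoulli (G : SimpleGraph V) (p : ℝ) (μ : Measure (G.edgeSet → Bool)) : Prop :=
  ∀ (S : Finset G.edgeSet) (f : G.edgeSet → Bool),
    μ {ω | ∀ e ∈ S, ω e = f e} =
      ∏ e ∈ S, (if f e then ENNReal.ofReal p else ENNReal.ofReal (1 - p))

/-- The two-point (connection) probability `τ(x,y)`. -/
def tau (G : SimpleGraph V) (μ : Measure (G.edgeSet → Bool)) (x y : V) : ℝ :=
  (μ (connEvent G x y)).toReal

/-- `τ^r(x,y)`: the probability that `x` and `y` are joined by an open path of
length at most `r`. -/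
def tauLe (G : SimpleGraph V) (μ : Measure (G.edgeSet → Bool)) (x y : V) (r : ℕ) : ℝ :=
  (μ (connEventLe G x y r)).toReal

/-- `κ(n) = inf {τ(x,y) : d(x,y) ≤ n}`. -/
def kappa (G : SimpleGraph V) (μ : Measure (G.edgeSet → Bool)) (n : ℕ) : ℝ :=
  sInf {t : ℝ | ∃ x y : V, G.dist x y ≤ n ∧ t = tau G μ x y}

/-- The cluster of the vertex `x` in the configuration `ω`. -/
def cluster (G : SimpleGraph V) (ω : G.edgeSet → Bool) (x : V) : Set V :=
  {y | (openSubgraph G ω).Reachable x y}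

/-- The configuration `ω` has no infinite clusters. -/
def NoInfiniteCluster (G : SimpleGraph V) (ω : G.edgeSet → Bool) : Prop :=
  ∀ x : V, (cluster G ω x).Finite

/-- The configuration `ω` has a unique infinite cluster. -/
def UniqueInfiniteCluster (G : SimpleGraph V) (ω : G.edgeSet → Bool) : Prop :=
  ∃! c : (openSubgraph G ω).ConnectedComponent, c.supp.Infinite

/-- The critical probability `p_c`, for a family `μ p` of percolation measures. -/
def pc (G : SimpleGraph V) (μ : ℝ → Measure (G.edgeSet → Bool)) : ℝ :=
  sSup {p : ℝ | p ∈ Set.Icc (0:ℝ) 1 ∧ μ p {ω | NoInfiniteCluster G ω} = 1}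

/-- `G` is quasi-transitive: the action of `Aut(G)` on `V` has finitely many orbits. -/
def QuasiTransitive (G : SimpleGraph V) : Prop :=
  ∃ S : Finset V, ∀ x : V, ∃ y ∈ S, ∃ γ : G ≃g G, γ y = x

/-- The graph-distance ball of radius `r` about `x`. -/
def ball (G : SimpleGraph V) (x : V) (r : ℕ) : Set V :=
  {y : V | G.dist x y ≤ r}

/-- The exponential growth rate `gr(G) = liminf |B(x,r)|^{1/r}` of `G`, seen from `x`. -/
def growth (G : SimpleGraph V) (x : V) : ℝ :=
  Filter.liminf (fun r : ℕ => ((ball G x r).ncard : ℝ) ^ ((r : ℝ)⁻¹)) Filter.atTop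

/-- `G` has exponential growth: `gr(G) > 1`. -/
def ExponentialGrowth (G : SimpleGraph V) : Prop :=
  ∀ x : V, 1 < growth G x

/-- `sup_{n ≥ 1} κ(n)^{1/n}`. -/
def supKappaRoot (G : SimpleGraph V) (μ : Measure (G.edgeSet → Bool)) : ℝ :=
  sSup {t : ℝ | ∃ n : ℕ, 1 ≤ n ∧ t = kappa G μ n ^ ((n : ℝ)⁻¹)}

attribute [local instance 10] Classical.propDecidable

section Weight

variable {ι : Type*}

def indicatorConfig (T : Finset ι) : ι → Bool := fun e => decide (e ∈ T)

def cylinderSet (S : Finset ι) (f : ι → Bool) : Set (ι → Bool) :=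
  {ω | ∀ e ∈ S, ω e = f e}

/-- The `Bernoulli(q)` probability of `A` if `A` depends only on the coordinates in `S`. -/
def bernoulliWeight (q : ℝ) (S : Finset ι) (A : Set (ι → Bool)) : ℝ :=
  ∑ T ∈ S.powerset,
    if indicatorConfig T ∈ A then q ^ T.card * (1 - q) ^ (S.card - T.card) else 0

lemma measurableSet_cylinderSet (S : Finset ι) (f : ι → Bool) :
    MeasurableSet (cylinderSet S f) := by
  have h : cylinderSet S f = (S : Set ι).pi fun e => {f e} := by
    ext ω; simp [cylinderSet]
  rw [h]
  exact MeasurableSet.pi S.countable_toSet fun _ _ => measurableSet_singleton _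

lemma pairwiseDisjoint_cylinderSet_indicatorConfig (S : Finset ι) :
    (S.powerset : Set (Finset ι)).PairwiseDisjoint
      fun T => cylinderSet S (indicatorConfig T) := by
  intro T hT T' hT' hne
  refine Set.disjoint_left.2 fun ω hω hω' => hne (Finset.ext fun e => ?_)
  by_cases he : e ∈ S
  · exact decide_eq_decide.1 ((hω e he).symm.trans (hω' e he))
  · exact iff_of_false (fun h => he (Finset.mem_powerset.1 hT h))
      (fun h => he (Finset.mem_powerset.1 hT' h))

lemma eq_biUnion_cylinderSet {A : Set (ι → Bool)} {S : Finset ι}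
    (hA : DependsOn (· ∈ A) (S : Set ι)) :
    A = ⋃ T ∈ S.powerset.filter (indicatorConfig · ∈ A),
      cylinderSet S (indicatorConfig T) := by
  ext ω
  simp only [Set.mem_iUnion, Finset.mem_filter, Finset.mem_powerset, exists_prop]
  have hω : ∀ e ∈ (S : Set ι), ω e = indicatorConfig (S.filter (ω · = true)) e := by
    intro e he
    cases hωe : ω e <;> simp_all [indicatorConfig]
  constructor
  · intro hωA
    exact ⟨_, ⟨Finset.filter_subset _ _, (hA hω).mp hωA⟩, hω⟩
  · rintro ⟨T, ⟨-, hT⟩, hωT⟩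
    exact (hA fun e he => (hωT e he).symm).mp hT

lemma measurableSet_of_dependsOn {A : Set (ι → Bool)} {S : Finset ι}
    (hA : DependsOn (· ∈ A) (S : Set ι)) : MeasurableSet A := by
  rw [eq_biUnion_cylinderSet hA]
  exact Finset.measurableSet_biUnion _ fun T _ => measurableSet_cylinderSet _ _

lemma measurable_comp_right {κ : Type*} (σ : κ → ι) :
    Measurable fun ω : ι → Bool => ω ∘ σ :=
  measurable_pi_lambda _ fun e => measurable_pi_apply (σ e)

variable {q : ℝ}

lemma bernoulliWeight_nonneg (hq0 : 0 ≤ q) (hq1 : q ≤ 1) (S : Finset ι)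
    (A : Set (ι → Bool)) : 0 ≤ bernoulliWeight q S A := by
  have : 0 ≤ 1 - q := by linarith
  exact Finset.sum_nonneg fun T _ => by split_ifs <;> positivity

lemma bernoulliWeight_mono (hq0 : 0 ≤ q) (hq1 : q ≤ 1) (S : Finset ι)
    {A B : Set (ι → Bool)} (h : A ⊆ B) : bernoulliWeight q S A ≤ bernoulliWeight q S B := by
  have : 0 ≤ 1 - q := by linarith
  refine Finset.sum_le_sum fun T _ => ?_
  by_cases hA : indicatorConfig T ∈ A
  · simp [hA, h hA]
  · rw [if_neg hA]
    split_ifs <;> positivity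

lemma indicatorConfig_insert (e : ι) (T : Finset ι) :
    indicatorConfig (insert e T) = Function.update (indicatorConfig T) e true := by
  funext a
  by_cases ha : a = e <;> simp [indicatorConfig, ha]

/-- Conditioning on the state of the coordinate `e`. -/
lemma bernoulliWeight_insert {e : ι} {S : Finset ι} (he : e ∉ S) (A : Set (ι → Bool)) :
    bernoulliWeight q (insert e S) A =
      (1 - q) * bernoulliWeight q S A
        + q * bernoulliWeight q S ((Function.update · e true) ⁻¹' A) := by
  rw [bernoulliWeight, Finset.sum_powerset_insert he, bernoulliWeight, bernoulliWeight,
    Finset.mul_sum, Finset.mul_sum, Finset.card_insert_of_notMem he]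
  congr 1
  · refine Finset.sum_congr rfl fun T hT => ?_
    have hTS : T.card ≤ S.card := Finset.card_le_card (Finset.mem_powerset.1 hT)
    rw [show S.card + 1 - T.card = S.card - T.card + 1 by omega]
    split_ifs <;> ring
  · refine Finset.sum_congr rfl fun T hT => ?_
    have heT : e ∉ T := fun h => he (Finset.mem_powerset.1 hT h)
    rw [Finset.card_insert_of_notMem heT, indicatorConfig_insert,
      show S.card + 1 - (T.card + 1) = S.card - T.card by omega]
    simp only [Set.mem_preimage]
    split_ifs <;> ring

lemma bernoulliWeight_mono_param {p : ℝ} (hq0 : 0 ≤ q) (hqp : q ≤ p) (hp1 : p ≤ 1)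
    (S : Finset ι) {A : Set (ι → Bool)} (hA : IsUpperSet A) :
    bernoulliWeight q S A ≤ bernoulliWeight p S A := by
  induction S using Finset.induction_on generalizing A with
  | empty => simp [bernoulliWeight]
  | @insert e S he ih =>
    set A' := (Function.update · e true) ⁻¹' A
    have hA' : IsUpperSet A' :=
      hA.preimage fun ω ω' h => update_le_update_iff.2 ⟨le_rfl, fun j _ => h j⟩
    have hAA' : A ⊆ A' := fun ω hω =>
      hA (le_update_iff.2 ⟨Bool.le_true _, fun _ _ => le_rfl⟩) hω
    have hmono := bernoulliWeight_mono hq0 (hqp.trans hp1) S hAA'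
    rw [bernoulliWeight_insert he, bernoulliWeight_insert he]
    calc (1 - q) * bernoulliWeight q S A + q * bernoulliWeight q S A'
        ≤ (1 - p) * bernoulliWeight q S A + p * bernoulliWeight q S A' := by
          nlinarith [mul_nonneg (sub_nonneg.2 hqp) (sub_nonneg.2 hmono)]
      _ ≤ (1 - p) * bernoulliWeight p S A + p * bernoulliWeight p S A' := by
        have h1p : 0 ≤ 1 - p := by linarith
        have hp0 : 0 ≤ p := hq0.trans hqp
        gcongr
        · exact ih hA
        · exact ih hA'

lemma pow_mul_bernoulliWeight_le {p : ℝ} (hq0 : 0 ≤ q) (hqp : q ≤ p) (hp0 : 0 < p)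
    (hp1 : p ≤ 1) (S : Finset ι) (A : Set (ι → Bool)) :
    (q / p) ^ S.card * bernoulliWeight p S A ≤ bernoulliWeight q S A := by
  rw [bernoulliWeight, bernoulliWeight, Finset.mul_sum]
  refine Finset.sum_le_sum fun T hT => ?_
  split_ifs
  · have hTS : T.card ≤ S.card := Finset.card_le_card (Finset.mem_powerset.1 hT)
    have hsplit : (q / p) ^ S.card = (q / p) ^ T.card * (q / p) ^ (S.card - T.card) := by
      rw [← pow_add, Nat.add_sub_cancel' hTS]
    have hratio : q / p * (1 - p) ≤ 1 - q := by
      rw [div_mul_eq_mul_div, div_le_iff₀ hp0]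
      nlinarith
    calc (q / p) ^ S.card * (p ^ T.card * (1 - p) ^ (S.card - T.card))
        = (q / p * p) ^ T.card * (q / p * (1 - p)) ^ (S.card - T.card) := by
          rw [hsplit, mul_pow, mul_pow]
          ring
      _ ≤ q ^ T.card * (1 - q) ^ (S.card - T.card) := by
          rw [div_mul_cancel₀ _ hp0.ne']
          have : 0 ≤ 1 - p := by linarith
          gcongr
  · simp

end Weight

section Measure

variable {G : SimpleGraph V} {q : ℝ} {μ : Measure (G.edgeSet → Bool)}

lemma IsBernoulli.isProbabilityMeasure (h : IsBernoulli G q μ) : IsProbabilityMeasure μ :=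
  ⟨by simpa using h ∅ fun _ => false⟩

lemma IsBernoulli.measure_cylinderSet_indicatorConfig (h : IsBernoulli G q μ)
    (hq0 : 0 ≤ q) (hq1 : q ≤ 1) {S T : Finset G.edgeSet} (hT : T ⊆ S) :
    μ (cylinderSet S (indicatorConfig T)) =
      ENNReal.ofReal (q ^ T.card * (1 - q) ^ (S.card - T.card)) := by
  have hclosed : ∀ e ∈ S \ T, (if indicatorConfig T e then ENNReal.ofReal q
      else ENNReal.ofReal (1 - q)) = ENNReal.ofReal (1 - q) := by
    intro e he
    simp [indicatorConfig, (Finset.mem_sdiff.1 he).2]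
  have hopen : ∀ e ∈ T, (if indicatorConfig T e then ENNReal.ofReal q
      else ENNReal.ofReal (1 - q)) = ENNReal.ofReal q := by
    intro e he
    simp [indicatorConfig, he]
  rw [cylinderSet, h, ← Finset.prod_sdiff hT, Finset.prod_congr rfl hclosed,
    Finset.prod_congr rfl hopen, Finset.prod_const, Finset.prod_const,
    Finset.card_sdiff_of_subset hT, ENNReal.ofReal_mul (by positivity),
    ENNReal.ofReal_pow hq0, ENNReal.ofReal_pow (by linarith), mul_comm]

lemma IsBernoulli.measure_eq_ofReal_bernoulliWeight (h : IsBernoulli G q μ)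
    (hq0 : 0 ≤ q) (hq1 : q ≤ 1) {A : Set (G.edgeSet → Bool)} {S : Finset G.edgeSet}
    (hA : DependsOn (· ∈ A) (S : Set G.edgeSet)) :
    μ A = ENNReal.ofReal (bernoulliWeight q S A) := by
  calc μ A
      = ∑ T ∈ S.powerset.filter (indicatorConfig · ∈ A),
          μ (cylinderSet S (indicatorConfig T)) := by
        conv_lhs => rw [eq_biUnion_cylinderSet hA]
        exact measure_biUnion_finset
          ((pairwiseDisjoint_cylinderSet_indicatorConfig S).subset
            (Finset.coe_subset.2 (Finset.filter_subset _ _)))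
          fun T _ => measurableSet_cylinderSet _ _
    _ = ∑ T ∈ S.powerset.filter (indicatorConfig · ∈ A),
          ENNReal.ofReal (q ^ T.card * (1 - q) ^ (S.card - T.card)) := by
        refine Finset.sum_congr rfl fun T hT => ?_
        exact h.measure_cylinderSet_indicatorConfig hq0 hq1
          (Finset.mem_powerset.1 (Finset.mem_filter.1 hT).1)
    _ = ENNReal.ofReal (bernoulliWeight q S A) := by
        have : 0 ≤ 1 - q := by linarith
        rw [← ENNReal.ofReal_sum_of_nonneg fun T _ => by positivity, bernoulliWeight,
          Finset.sum_filter]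

lemma IsBernoulli.measure_eq_of_dependsOn {ν : Measure (G.edgeSet → Bool)}
    (hμ : IsBernoulli G q μ) (hν : IsBernoulli G q ν) (hq0 : 0 ≤ q) (hq1 : q ≤ 1)
    {A : Set (G.edgeSet → Bool)} {S : Finset G.edgeSet}
    (hA : DependsOn (· ∈ A) (S : Set G.edgeSet)) : μ A = ν A := by
  rw [hμ.measure_eq_ofReal_bernoulliWeight hq0 hq1 hA,
    hν.measure_eq_ofReal_bernoulliWeight hq0 hq1 hA]

lemma IsBernoulli.map_comp_equiv (h : IsBernoulli G q μ) (σ : G.edgeSet ≃ G.edgeSet) :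
    IsBernoulli G q (μ.map (· ∘ σ)) := by
  intro S f
  change μ.map (· ∘ σ) (cylinderSet S f) = _
  have hpre :
      (· ∘ σ) ⁻¹' cylinderSet S f = cylinderSet (S.map σ.toEmbedding) (f ∘ σ.symm) := by
    ext ω
    simp only [cylinderSet, Set.mem_preimage, Set.mem_ofPred_eq, Finset.mem_map_equiv,
      Function.comp_apply]
    exact ⟨fun h e he => by simpa using h _ he,
      fun h e he => by simpa using h (σ e) (by simpa)⟩
  rw [Measure.map_apply (measurable_comp_right σ) (measurableSet_cylinderSet S f), hpre]
  exact (h _ _).trans (by simp [Finset.prod_map])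

end Measure

section Graph

variable {G : SimpleGraph V}

lemma mem_edgeSet_openSubgraph {ω : G.edgeSet → Bool} {e : Sym2 V} :
    e ∈ (openSubgraph G ω).edgeSet ↔ ∃ he : e ∈ G.edgeSet, ω ⟨e, he⟩ = true := by
  rw [openSubgraph, SimpleGraph.edgeSet_fromEdgeSet]
  exact ⟨fun h => h.1, fun h => ⟨h, G.not_isDiag_of_mem_edgeSet h.1⟩⟩

lemma openSubgraph_adj {ω : G.edgeSet → Bool} {u v : V} :
    (openSubgraph G ω).Adj u v ↔
      ∃ he : s(u, v) ∈ G.edgeSet, ω ⟨s(u, v), he⟩ = true := by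
  rw [← SimpleGraph.mem_edgeSet, mem_edgeSet_openSubgraph]

lemma openSubgraph_le (ω : G.edgeSet → Bool) : openSubgraph G ω ≤ G :=
  fun _ _ h => (openSubgraph_adj.1 h).1

lemma openSubgraph_mono {ω ω' : G.edgeSet → Bool} (h : ω ≤ ω') :
    openSubgraph G ω ≤ openSubgraph G ω' :=
  SimpleGraph.fromEdgeSet_mono fun _ ⟨he, hωe⟩ =>
    ⟨he, le_antisymm (Bool.le_true _) (hωe ▸ h ⟨_, he⟩)⟩

lemma finite_setOf_exists_walk_length_le (hlf : ∀ v : V, (G.neighborSet v).Finite) (r : ℕ) :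
    ∀ x : V, {y : V | ∃ w : G.Walk x y, w.length ≤ r}.Finite := by
  induction r with
  | zero =>
    refine fun x => (Set.finite_singleton x).subset ?_
    rintro y ⟨w, hw⟩
    exact (SimpleGraph.Walk.eq_of_length_eq_zero (Nat.le_zero.1 hw)).symm
  | succ r ih =>
    intro x
    refine (((hlf x).insert x).biUnion fun z _ => ih z).subset ?_
    rintro y ⟨w, hw⟩
    cases w with
    | nil => exact Set.mem_biUnion (Set.mem_insert _ _) ⟨.nil, Nat.zero_le r⟩
    | cons h w' =>
      rw [SimpleGraph.Walk.length_cons] at hw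
      exact Set.mem_biUnion (Set.mem_insert_of_mem _ h) ⟨w', by omega⟩

lemma ball_finite (hconn : G.Connected) (hlf : ∀ v : V, (G.neighborSet v).Finite)
    (x : V) (r : ℕ) : (ball G x r).Finite := by
  refine (finite_setOf_exists_walk_length_le hlf r x).subset fun y hy => ?_
  obtain ⟨w, hw⟩ := (hconn x y).exists_walk_length_eq_dist
  exact ⟨w, hw.trans_le hy⟩

def edgeBall (G : SimpleGraph V) (x : V) (r : ℕ) : Set G.edgeSet :=
  {e | ∀ v ∈ (e : Sym2 V), v ∈ ball G x r}

lemma edgeBall_finite (hconn : G.Connected) (hlf : ∀ v : V, (G.neighborSet v).Finite)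
    (x : V) (r : ℕ) : (edgeBall G x r).Finite := by
  have hB := ball_finite hconn hlf x r
  have hsym : {z : Sym2 V | ∀ v ∈ z, v ∈ ball G x r}.Finite := by
    refine ((hB.prod hB).image fun p => s(p.1, p.2)).subset fun z hz => ?_
    induction z with
    | _ a b =>
      exact ⟨(a, b), ⟨hz a (Sym2.mem_mk_left a b), hz b (Sym2.mem_mk_right a b)⟩, rfl⟩
  exact hsym.preimage Subtype.val_injective.injOn

lemma dist_le_of_mem_support {H : SimpleGraph V} (hH : H ≤ G) {x y v : V} (w : H.Walk x y)
    (hv : v ∈ w.support) : G.dist x v ≤ w.length := by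
  calc G.dist x v ≤ ((w.takeUntil v hv).mapLe hH).length := SimpleGraph.dist_le _
    _ ≤ w.length := by
      rw [SimpleGraph.Walk.length_mapLe]
      exact w.length_takeUntil_le_length hv

lemma mem_connEventLe_of_eqOn_edgeBall {ω ω' : G.edgeSet → Bool} {x y : V} {r : ℕ}
    (hω : ω ∈ connEventLe G x y r) (h : ∀ e ∈ edgeBall G x r, ω e = ω' e) :
    ω' ∈ connEventLe G x y r := by
  obtain ⟨w, hw, hlen⟩ := hω
  have hedges : ∀ e ∈ w.edges, e ∈ (openSubgraph G ω').edgeSet := by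
    intro e he
    obtain ⟨hG, hωe⟩ := mem_edgeSet_openSubgraph.1 (w.edges_subset_edgeSet he)
    have hball : ⟨e, hG⟩ ∈ edgeBall G x r := fun v hv =>
      (dist_le_of_mem_support (openSubgraph_le ω) w
        (SimpleGraph.Walk.mem_support_of_mem_edges he hv)).trans hlen
    exact mem_edgeSet_openSubgraph.2 ⟨hG, h _ hball ▸ hωe⟩
  exact ⟨w.transfer _ hedges, hw.transfer hedges, by rwa [SimpleGraph.Walk.length_transfer]⟩

lemma dependsOn_connEventLe (x y : V) (r : ℕ) :
    DependsOn (· ∈ connEventLe G x y r) (edgeBall G x r) := fun _ _ h =>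
  propext ⟨fun hω => mem_connEventLe_of_eqOn_edgeBall hω h,
    fun hω => mem_connEventLe_of_eqOn_edgeBall hω fun e he => (h e he).symm⟩

lemma isUpperSet_connEventLe (x y : V) (r : ℕ) : IsUpperSet (connEventLe G x y r) := by
  rintro ω ω' hle ⟨w, hw, hlen⟩
  exact ⟨w.mapLe (openSubgraph_mono hle), hw.mapLe _, by rwa [SimpleGraph.Walk.length_mapLe]⟩

lemma monotone_connEventLe (x y : V) : Monotone (connEventLe G x y) :=
  fun _ _ h _ ⟨w, hw, hlen⟩ => ⟨w, hw, hlen.trans h⟩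

lemma iUnion_connEventLe (x y : V) : ⋃ r, connEventLe G x y r = connEvent G x y := by
  ext ω
  simp only [Set.mem_iUnion]
  exact ⟨fun ⟨_, w, _⟩ => ⟨w⟩, fun ⟨w⟩ => ⟨_, w.toPath, w.toPath.2, le_rfl⟩⟩

lemma _root_.SimpleGraph.Iso.dist_map_le {V' : Type*} {G' : SimpleGraph V'} (φ : G ≃g G')
    (u v : V) : G'.dist (φ u) (φ v) ≤ G.dist u v := by
  by_cases huv : G.Reachable u v
  · obtain ⟨w, hw⟩ := huv.exists_walk_length_eq_dist
    exact (SimpleGraph.dist_le (w.map φ.toHom)).trans (by rw [SimpleGraph.Walk.length_map, hw])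
  · rw [SimpleGraph.dist_eq_zero_of_not_reachable (mt SimpleGraph.Iso.reachable_iff.1 huv)]
    exact Nat.zero_le _

lemma _root_.SimpleGraph.Iso.dist_map {V' : Type*} {G' : SimpleGraph V'} (φ : G ≃g G')
    (u v : V) : G'.dist (φ u) (φ v) = G.dist u v :=
  le_antisymm (φ.dist_map_le u v) (by simpa using φ.symm.dist_map_le (φ u) (φ v))

def openSubgraphIso (γ : G ≃g G) (ω : G.edgeSet → Bool) :
    openSubgraph G (ω ∘ γ.mapEdgeSet) ≃g openSubgraph G ω where
  toEquiv := γ.toEquiv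
  map_rel_iff' {u v} := by
    simp only [openSubgraph_adj, SimpleGraph.mem_edgeSet]
    exact ⟨fun ⟨h, hω⟩ => ⟨γ.map_adj_iff.1 h, hω⟩,
      fun ⟨h, hω⟩ => ⟨γ.map_adj_iff.2 h, hω⟩⟩

lemma mem_connEventLe_comp_mapEdgeSet (γ : G ≃g G) (ω : G.edgeSet → Bool) (x y : V)
    (r : ℕ) :
    ω ∘ γ.mapEdgeSet ∈ connEventLe G x y r ↔ ω ∈ connEventLe G (γ x) (γ y) r := by
  set φ := openSubgraphIso γ ω
  constructor
  · rintro ⟨w, hw, hlen⟩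
    refine ⟨(w.map φ.toHom).copy rfl rfl, ?_, ?_⟩
    · exact (SimpleGraph.Walk.isPath_copy _ _ _).2 (hw.map φ.injective)
    · exact (SimpleGraph.Walk.length_copy _ _ _).trans_le
        ((SimpleGraph.Walk.length_map _ _).trans_le hlen)
  · rintro ⟨w, hw, hlen⟩
    refine ⟨(w.map φ.symm.toHom).copy (γ.symm_apply_apply x) (γ.symm_apply_apply y), ?_, ?_⟩
    · exact (SimpleGraph.Walk.isPath_copy _ _ _).2 (hw.map φ.symm.injective)
    · exact (SimpleGraph.Walk.length_copy _ _ _).trans_le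
        ((SimpleGraph.Walk.length_map _ _).trans_le hlen)

end Graph

section TwoPoint

variable {G : SimpleGraph V} {q p : ℝ} {μ μq μp : Measure (G.edgeSet → Bool)}

lemma monotone_tauLe (μ : Measure (G.edgeSet → Bool)) [IsFiniteMeasure μ] (x y : V) :
    Monotone (tauLe G μ x y) := fun _ _ h =>
  ENNReal.toReal_mono (measure_ne_top μ _) (measure_mono (monotone_connEventLe x y h))

lemma tendsto_tauLe_atTop (μ : Measure (G.edgeSet → Bool)) [IsFiniteMeasure μ] (x y : V) :
    Tendsto (tauLe G μ x y) atTop (𝓝 (tau G μ x y)) := by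
  have h := tendsto_measure_iUnion_atTop (μ := μ) (monotone_connEventLe (G := G) x y)
  rw [iUnion_connEventLe] at h
  exact (ENNReal.tendsto_toReal (measure_ne_top μ _)).comp h

lemma tauLe_le_tau (μ : Measure (G.edgeSet → Bool)) [IsFiniteMeasure μ] (x y : V) (r : ℕ) :
    tauLe G μ x y r ≤ tau G μ x y :=
  (monotone_tauLe μ x y).ge_of_tendsto (tendsto_tauLe_atTop μ x y) r

lemma IsBernoulli.tauLe_eq_bernoulliWeight (h : IsBernoulli G q μ) (hq0 : 0 ≤ q) (hq1 : q ≤ 1)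
    (hconn : G.Connected) (hlf : ∀ v : V, (G.neighborSet v).Finite) (x y : V) (r : ℕ) :
    tauLe G μ x y r =
      bernoulliWeight q (edgeBall_finite hconn hlf x r).toFinset (connEventLe G x y r) := by
  have hdep := dependsOn_connEventLe (G := G) x y r
  rw [← (edgeBall_finite hconn hlf x r).coe_toFinset] at hdep
  rw [tauLe, h.measure_eq_ofReal_bernoulliWeight hq0 hq1 hdep,
    ENNReal.toReal_ofReal (bernoulliWeight_nonneg hq0 hq1 _ _)]

lemma IsBernoulli.tauLe_le_tauLe (hq : IsBernoulli G q μq) (hp : IsBernoulli G p μp)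
    (hq0 : 0 ≤ q) (hqp : q ≤ p) (hp1 : p ≤ 1) (hconn : G.Connected)
    (hlf : ∀ v : V, (G.neighborSet v).Finite) (x y : V) (r : ℕ) :
    tauLe G μq x y r ≤ tauLe G μp x y r := by
  rw [hq.tauLe_eq_bernoulliWeight hq0 (hqp.trans hp1) hconn hlf,
    hp.tauLe_eq_bernoulliWeight (hq0.trans hqp) hp1 hconn hlf]
  exact bernoulliWeight_mono_param hq0 hqp hp1 _ (isUpperSet_connEventLe x y r)

lemma IsBernoulli.tau_le_tau (hq : IsBernoulli G q μq) (hp : IsBernoulli G p μp)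
    (hq0 : 0 ≤ q) (hqp : q ≤ p) (hp1 : p ≤ 1) (hconn : G.Connected)
    (hlf : ∀ v : V, (G.neighborSet v).Finite) (x y : V) :
    tau G μq x y ≤ tau G μp x y := by
  have := hq.isProbabilityMeasure
  have := hp.isProbabilityMeasure
  exact le_of_tendsto_of_tendsto' (tendsto_tauLe_atTop μq x y) (tendsto_tauLe_atTop μp x y)
    (hq.tauLe_le_tauLe hp hq0 hqp hp1 hconn hlf x y)

lemma IsBernoulli.pow_ncard_edgeBall_mul_tauLe_le (hq : IsBernoulli G q μq)
    (hp : IsBernoulli G p μp) (hq0 : 0 ≤ q) (hqp : q ≤ p) (hp0 : 0 < p) (hp1 : p ≤ 1)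
    (hconn : G.Connected) (hlf : ∀ v : V, (G.neighborSet v).Finite) (x y : V) (r : ℕ) :
    (q / p) ^ (edgeBall G x r).ncard * tauLe G μp x y r ≤ tauLe G μq x y r := by
  rw [hq.tauLe_eq_bernoulliWeight hq0 (hqp.trans hp1) hconn hlf,
    hp.tauLe_eq_bernoulliWeight hp0.le hp1 hconn hlf,
    Set.ncard_eq_toFinset_card _ (edgeBall_finite hconn hlf x r)]
  exact pow_mul_bernoulliWeight_le hq0 hqp hp0 hp1 _ _

lemma IsBernoulli.tauLe_map (h : IsBernoulli G q μ) (hq0 : 0 ≤ q) (hq1 : q ≤ 1)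
    (hconn : G.Connected) (hlf : ∀ v : V, (G.neighborSet v).Finite) (γ : G ≃g G)
    (x y : V) (r : ℕ) : tauLe G μ (γ x) (γ y) r = tauLe G μ x y r := by
  have hdep := dependsOn_connEventLe (G := G) x y r
  rw [← (edgeBall_finite hconn hlf x r).coe_toFinset] at hdep
  have hpre :
      (· ∘ γ.mapEdgeSet) ⁻¹' connEventLe G x y r = connEventLe G (γ x) (γ y) r := by
    ext ω
    exact mem_connEventLe_comp_mapEdgeSet γ ω x y r
  rw [tauLe, tauLe, ← hpre, ← Measure.map_apply (measurable_comp_right _)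
    (measurableSet_of_dependsOn hdep),
    (h.map_comp_equiv γ.mapEdgeSet).measure_eq_of_dependsOn h hq0 hq1 hdep]

end TwoPoint

section Kappa

variable {G : SimpleGraph V} {q p : ℝ} {μ μq μp : Measure (G.edgeSet → Bool)}

lemma kappa_le_tau (μ : Measure (G.edgeSet → Bool)) {n : ℕ} {x y : V} (h : G.dist x y ≤ n) :
    kappa G μ n ≤ tau G μ x y :=
  csInf_le ⟨0, by rintro _ ⟨x, y, -, rfl⟩; exact ENNReal.toReal_nonneg⟩ ⟨x, y, h, rfl⟩

lemma kappa_nonneg (μ : Measure (G.edgeSet → Bool)) (n : ℕ) : 0 ≤ kappa G μ n :=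
  Real.sInf_nonneg <| by rintro _ ⟨x, y, -, rfl⟩; exact ENNReal.toReal_nonneg

lemma le_kappa [Nonempty V] (μ : Measure (G.edgeSet → Bool)) {n : ℕ} {c : ℝ}
    (h : ∀ x y : V, G.dist x y ≤ n → c ≤ tau G μ x y) : c ≤ kappa G μ n := by
  obtain ⟨x⟩ := ‹Nonempty V›
  refine le_csInf ⟨_, x, x, by simp, rfl⟩ ?_
  rintro _ ⟨x, y, hxy, rfl⟩
  exact h x y hxy

lemma kappa_le_one [Nonempty V] (μ : Measure (G.edgeSet → Bool)) [IsProbabilityMeasure μ]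
    (n : ℕ) : kappa G μ n ≤ 1 := by
  obtain ⟨x⟩ := ‹Nonempty V›
  exact (kappa_le_tau μ (by simp : G.dist x x ≤ n)).trans measureReal_le_one

lemma supKappaRoot_nonneg (μ : Measure (G.edgeSet → Bool)) : 0 ≤ supKappaRoot G μ :=
  Real.sSup_nonneg <| by
    rintro _ ⟨n, -, rfl⟩
    exact Real.rpow_nonneg (kappa_nonneg μ n) _

lemma le_supKappaRoot [Nonempty V] (μ : Measure (G.edgeSet → Bool)) [IsProbabilityMeasure μ]
    {n : ℕ} (hn : 1 ≤ n) : kappa G μ n ^ (n : ℝ)⁻¹ ≤ supKappaRoot G μ := by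
  refine le_csSup ⟨1, ?_⟩ ⟨n, hn, rfl⟩
  rintro _ ⟨m, -, rfl⟩
  exact Real.rpow_le_one (kappa_nonneg μ m) (kappa_le_one μ m) (by positivity)

lemma exists_lt_kappa_rpow_of_lt_supKappaRoot {c : ℝ} (hc : c < supKappaRoot G μ) :
    ∃ n, 1 ≤ n ∧ c < kappa G μ n ^ (n : ℝ)⁻¹ := by
  have hne : {t : ℝ | ∃ n : ℕ, 1 ≤ n ∧ t = kappa G μ n ^ (n : ℝ)⁻¹}.Nonempty :=
    ⟨_, 1, le_rfl, rfl⟩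
  obtain ⟨_, ⟨n, hn, rfl⟩, hcn⟩ := exists_lt_of_lt_csSup hne hc
  exact ⟨n, hn, hcn⟩

lemma IsBernoulli.supKappaRoot_le_supKappaRoot (hq : IsBernoulli G q μq)
    (hp : IsBernoulli G p μp) (hq0 : 0 ≤ q) (hqp : q ≤ p) (hp1 : p ≤ 1) (hconn : G.Connected)
    (hlf : ∀ v : V, (G.neighborSet v).Finite) :
    supKappaRoot G μq ≤ supKappaRoot G μp := by
  have := hconn.nonempty
  have := hp.isProbabilityMeasure
  refine csSup_le ⟨_, 1, le_rfl, rfl⟩ ?_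
  rintro _ ⟨n, hn, rfl⟩
  refine (Real.rpow_le_rpow (kappa_nonneg μq n) ?_ (by positivity)).trans (le_supKappaRoot μp hn)
  exact le_kappa μp fun x y hxy =>
    (kappa_le_tau μq hxy).trans (hq.tau_le_tau hp hq0 hqp hp1 hconn hlf x y)

end Kappa

section LeftContinuity

variable {G : SimpleGraph V} {μ : ℝ → Measure (G.edgeSet → Bool)} {p : ℝ} {n : ℕ}

theorem exists_pow_mul_le_kappa (hconn : G.Connected) (hlf : ∀ v : V, (G.neighborSet v).Finite)
    (hqt : QuasiTransitive G) (hμ : ∀ q ∈ Set.Icc (0:ℝ) 1, IsBernoulli G q (μ q))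
    (hp0 : 0 < p) (hp1 : p ≤ 1) {a : ℝ} (ha0 : 0 ≤ a) (ha : a < kappa G (μ p) n) :
    ∃ M : ℕ, ∀ q ∈ Set.Icc 0 p, (q / p) ^ M * a ≤ kappa G (μ q) n := by
  obtain ⟨S, hS⟩ := hqt
  have hbp := hμ p ⟨hp0.le, hp1⟩
  have := hbp.isProbabilityMeasure
  have := hconn.nonempty
  set pairs := {pr : V × V | pr.1 ∈ S ∧ G.dist pr.1 pr.2 ≤ n}
  have hpairs : pairs.Finite := by
    refine (S.finite_toSet.biUnion fun s _ =>
      (Set.finite_singleton s).prod (ball_finite hconn hlf s n)).subset ?_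
    rintro ⟨s, z⟩ ⟨hs, hz⟩
    exact Set.mem_biUnion hs ⟨rfl, hz⟩
  obtain ⟨R, hR⟩ : ∃ R, ∀ pr ∈ pairs, a < tauLe G (μ p) pr.1 pr.2 R :=
    ((eventually_all_finite hpairs).2 fun pr hpr =>
      (tendsto_tauLe_atTop _ _ _).eventually_const_lt (ha.trans_le (kappa_le_tau _ hpr.2))).exists
  refine ⟨S.sup fun s => (edgeBall G s R).ncard, fun q ⟨hq0, hqp⟩ =>
    le_kappa _ fun x y hxy => ?_⟩
  obtain ⟨s, hs, γ, rfl⟩ := hS x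
  obtain ⟨z, rfl⟩ := γ.surjective y
  have hbq := hμ q ⟨hq0, hqp.trans hp1⟩
  have := hbq.isProbabilityMeasure
  have hsz : G.dist s z ≤ n := (γ.dist_map s z).symm.trans_le hxy
  have hqp1 : q / p ≤ 1 := (div_le_one hp0).2 hqp
  calc (q / p) ^ (S.sup fun s => (edgeBall G s R).ncard) * a
      ≤ (q / p) ^ (edgeBall G s R).ncard * tauLe G (μ p) s z R := by
        refine mul_le_mul ?_ (hR (s, z) ⟨hs, hsz⟩).le ha0 (by positivity)
        exact pow_le_pow_of_le_one (by positivity) hqp1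
          (Finset.le_sup (f := fun s => (edgeBall G s R).ncard) hs)
    _ ≤ tauLe G (μ q) s z R :=
        hbq.pow_ncard_edgeBall_mul_tauLe_le hbp hq0 hqp hp0 hp1 hconn hlf s z R
    _ = tauLe G (μ q) (γ s) (γ z) R :=
        (hbq.tauLe_map hq0 (hqp.trans hp1) hconn hlf γ s z R).symm
    _ ≤ tau G (μ q) (γ s) (γ z) := tauLe_le_tau _ _ _ _

theorem eventually_lt_kappa (hconn : G.Connected) (hlf : ∀ v : V, (G.neighborSet v).Finite)
    (hqt : QuasiTransitive G) (hμ : ∀ q ∈ Set.Icc (0:ℝ) 1, IsBernoulli G q (μ q))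
    (hp0 : 0 < p) (hp1 : p ≤ 1) {a : ℝ} (ha : a < kappa G (μ p) n) :
    ∀ᶠ q in 𝓝[<] p, a < kappa G (μ q) n := by
  rcases lt_or_ge a 0 with ha0 | ha0
  · exact Eventually.of_forall fun q => ha0.trans_le (kappa_nonneg _ n)
  obtain ⟨b, hab, hb⟩ := exists_between ha
  obtain ⟨M, hM⟩ := exists_pow_mul_le_kappa hconn hlf hqt hμ hp0 hp1 (ha0.trans hab.le) hb
  have hlim : Tendsto (fun q => (q / p) ^ M * b) (𝓝[<] p) (𝓝 b) := by
    have hcont : Continuous fun q : ℝ => (q / p) ^ M * b := by fun_prop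
    simpa [hp0.ne'] using (hcont.tendsto p).mono_left nhdsWithin_le_nhds
  filter_upwards [hlim.eventually_const_lt hab, Ioo_mem_nhdsLT hp0] with q hq hq'
  exact hq.trans_le (hM q ⟨hq'.1.le, hq'.2.le⟩)

theorem eventually_lt_supKappaRoot (hconn : G.Connected)
    (hlf : ∀ v : V, (G.neighborSet v).Finite) (hqt : QuasiTransitive G)
    (hμ : ∀ q ∈ Set.Icc (0:ℝ) 1, IsBernoulli G q (μ q)) (hp0 : 0 < p) (hp1 : p ≤ 1)
    {c : ℝ} (hc : c < supKappaRoot G (μ p)) :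
    ∀ᶠ q in 𝓝[<] p, c < supKappaRoot G (μ q) := by
  rcases lt_or_ge c 0 with hc0 | hc0
  · exact Eventually.of_forall fun q => hc0.trans_le (supKappaRoot_nonneg _)
  obtain ⟨n, hn, hcn⟩ := exists_lt_kappa_rpow_of_lt_supKappaRoot hc
  have hroot : ∀ q, c < kappa G (μ q) n ^ (n : ℝ)⁻¹ ↔ c ^ n < kappa G (μ q) n := by
    intro q
    rw [Real.lt_rpow_inv_iff_of_pos hc0 (kappa_nonneg _ n) (by positivity), Real.rpow_natCast]
  have := hconn.nonempty
  filter_upwards [eventually_lt_kappa hconn hlf hqt hμ hp0 hp1 ((hroot p).1 hcn),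
    Ioo_mem_nhdsLT hp0] with q hq hq'
  have := (hμ q ⟨hq'.1.le, hq'.2.le.trans hp1⟩).isProbabilityMeasure
  exact ((hroot q).2 hq).trans_le (le_supKappaRoot _ hn)

end LeftContinuity

/-- On a connected, locally finite, quasi-transitive graph, the function
`p ↦ sup_{n ≥ 1} κ_p(n)^{1/n}` is left continuous on `(0,1]`. -/
theorem supKappaRoot_left_continuous
    {V : Type*} (G : SimpleGraph V)
    (hconn : G.Connected) (hlf : ∀ v : V, (G.neighborSet v).Finite)
    (hqt : QuasiTransitive G)
    (μ : ℝ → Measure (G.edgeSet → Bool))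
    (hμ : ∀ q ∈ Set.Icc (0:ℝ) 1, IsBernoulli G q (μ q)) :
    ∀ p ∈ Set.Ioc (0:ℝ) 1,
      Filter.Tendsto (fun ε : ℝ => supKappaRoot G (μ (p - ε))) (𝓝[>] (0:ℝ))
        (𝓝 (supKappaRoot G (μ p))) := by
  rintro p ⟨hp0, hp1⟩
  have hleft :
      Tendsto (fun q => supKappaRoot G (μ q)) (𝓝[<] p) (𝓝 (supKappaRoot G (μ p))) := by
    refine tendsto_order.2 ⟨fun c hc => eventually_lt_supKappaRoot hconn hlf hqt hμ hp0 hp1 hc,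
      fun c hc => ?_⟩
    filter_upwards [Ioo_mem_nhdsLT hp0] with q hq
    have hbq := hμ q ⟨hq.1.le, hq.2.le.trans hp1⟩
    exact (hbq.supKappaRoot_le_supKappaRoot (hμ p ⟨hp0.le, hp1⟩) hq.1.le hq.2.le hp1 hconn
      hlf).trans_lt hc
  refine hleft.comp (tendsto_nhdsWithin_iff.2 ⟨?_, ?_⟩)
  · have hcont : Continuous fun ε : ℝ => p - ε := by fun_prop
    simpa using (hcont.tendsto 0).mono_left nhdsWithin_le_nhds
  · filter_upwards [self_mem_nhdsWithin] with ε (hε : 0 < ε)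
    exact sub_lt_self p hε

end BernoulliPercolation
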